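/- Let n ∈ ℤ_{−ε} with n > 0, and consider the module π(ε,n). Then W⁺ = span{v_j : j ∈ ℤ_ε, j ≥ n+1} and W⁻ = span{v_j : j ∈ ℤ_ε, j ≤ −(n+1)} are irreducible submodules; their sum W⁺ ⊕ W⁻ is the unique maximal proper submodule of π(ε,n); and the quotient module V_ε/(W⁺ ⊕ W⁻) is irreducible of dimension n (so F_n, the n-dimensional irreducible, is the unique irreducible quotient of π(ε,n)). -/

import Mathlib

namespace SL2Deform

/-- The index set `ℤ_ε = {j : ℤ | (-1)^j = ε}`, for a sign `ε ∈ {1, -1}`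
(i.e. a unit of `ℤ`). -/
abbrev idx (ε : ℤˣ) : Type := {j : ℤ // (-1 : ℤˣ) ^ j = ε}

/-- `V ε`: the complex vector space of finitely supported functions on `ℤ_ε`,
with standard basis `{v_j}`. -/
abbrev V (ε : ℤˣ) : Type := idx ε →₀ ℂ

/-- The standard basis vector `v_j` of `V ε`, for `j ∈ ℤ_ε`. -/
noncomputable def bv (ε : ℤˣ) (j : ℤ) (h : (-1 : ℤˣ) ^ j = ε) : V ε :=
  Finsupp.single ⟨j, h⟩ 1

lemma parity_two : (-1 : ℤˣ) ^ (2 : ℤ) = 1 := by decide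
lemma parity_neg_two : (-1 : ℤˣ) ^ (-2 : ℤ) = 1 := by decide
lemma parity_zero : (-1 : ℤˣ) ^ (0 : ℤ) = 1 := by decide

lemma parity_shift {ε : ℤˣ} {j : ℤ} (h : (-1 : ℤˣ) ^ j = ε) {s : ℤ}
    (hs : (-1 : ℤˣ) ^ s = 1) : (-1 : ℤˣ) ^ (j + s) = ε := by
  rw [zpow_add, h, hs, mul_one]

/-- If `m ∈ ℤ_{-ε}` then `m + 1 ∈ ℤ_ε`. -/
lemma parity_succ {ε : ℤˣ} {m : ℤ} (h : (-1 : ℤˣ) ^ m = -ε) :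
    (-1 : ℤˣ) ^ (m + 1) = ε := by
  rw [zpow_add, h, zpow_one]
  simp

/-- If `m ∈ ℤ_{-ε}` then `m - 1 ∈ ℤ_ε`. -/
lemma parity_pred {ε : ℤˣ} {m : ℤ} (h : (-1 : ℤˣ) ^ m = -ε) :
    (-1 : ℤˣ) ^ (m - 1) = ε := by
  rw [sub_eq_add_neg, zpow_add, h, zpow_neg, zpow_one]
  simp

/-- The linear operator on `V ε` sending `v_j` to `c j • v_{j+s}`,
for an even shift `s`. -/
noncomputable def shiftOp (ε : ℤˣ) (s : ℤ) (hs : (-1 : ℤˣ) ^ s = 1) (c : ℤ → ℂ) :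
    V ε →ₗ[ℂ] V ε :=
  Finsupp.lsum ℂ fun j =>
    LinearMap.toSpanSingleton ℂ (V ε)
      (Finsupp.single ⟨j.1 + s, parity_shift j.2 hs⟩ (c j.1))

/-- `H v_j = j • v_j`. -/
noncomputable def Hop (ε : ℤˣ) : V ε →ₗ[ℂ] V ε :=
  shiftOp ε 0 parity_zero fun j => (j : ℂ)

/-- Principal series: `E v_j = ½(ν + j + 1) • v_{j+2}`. -/
noncomputable def Eop (ε : ℤˣ) (ν : ℂ) : V ε →ₗ[ℂ] V ε :=
  shiftOp ε 2 parity_two fun j => (1 / 2 : ℂ) * (ν + j + 1)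

/-- Principal series: `F v_j = ½(ν - j + 1) • v_{j-2}`. -/
noncomputable def Fop (ε : ℤˣ) (ν : ℂ) : V ε →ₗ[ℂ] V ε :=
  shiftOp ε (-2) parity_neg_two fun j => (1 / 2 : ℂ) * (ν - j + 1)

/-- `f_m(ν) = ½ |ν²-m²|^{1/2} (ν+m)/|ν+m|` for `ν ≠ -m`, and `f_m(-m) = 0`. -/
noncomputable def fm (m : ℤ) (ν : ℂ) : ℂ :=
  if ν = -(m : ℂ) then 0
  else (1 / 2 : ℂ) * (Real.sqrt ‖ν ^ 2 - (m : ℂ) ^ 2‖ : ℝ) * (ν + m) /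
    (‖ν + (m : ℂ)‖ : ℝ)

/-- Deformed module: `E v_{m-1} = f_m(ν) • v_{m+1}`, i.e. `E v_j = f_{j+1}(ν) • v_{j+2}`. -/
noncomputable def PEop (ε : ℤˣ) (ν : ℂ) : V ε →ₗ[ℂ] V ε :=
  shiftOp ε 2 parity_two fun j => fm (j + 1) ν

/-- Deformed module: `F v_{m+1} = f_{-m}(ν) • v_{m-1}`, i.e. `F v_j = f_{-(j-1)}(ν) • v_{j-2}`. -/
noncomputable def PFop (ε : ℤˣ) (ν : ℂ) : V ε →ₗ[ℂ] V ε :=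
  shiftOp ε (-2) parity_neg_two fun j => fm (1 - j) ν

/-- The module `π'(ε,ν)`: `E v_{m-1} = ½(ν - |m|) • v_{m+1}`,
i.e. `E v_j = ½(ν - |j+1|) • v_{j+2}`. -/
noncomputable def E'op (ε : ℤˣ) (ν : ℂ) : V ε →ₗ[ℂ] V ε :=
  shiftOp ε 2 parity_two fun j => (1 / 2 : ℂ) * (ν - ((|j + 1| : ℤ) : ℂ))

/-- The module `π'(ε,ν)`: `F v_{m+1} = ½(ν + |m|) • v_{m-1}`,
i.e. `F v_j = ½(ν + |j-1|) • v_{j-2}`. -/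
noncomputable def F'op (ε : ℤˣ) (ν : ℂ) : V ε →ₗ[ℂ] V ε :=
  shiftOp ε (-2) parity_neg_two fun j => (1 / 2 : ℂ) * (ν + ((|j - 1| : ℤ) : ℂ))

/-- `ν ∈ ℤ_{-ε}`: `ν` is an integer with `(-1)^ν = -ε`. -/
def inZminus (ε : ℤˣ) (ν : ℂ) : Prop :=
  ∃ n : ℤ, ν = (n : ℂ) ∧ (-1 : ℤˣ) ^ n = -ε

section ModuleNotions

variable {M : Type*} [AddCommGroup M] [Module ℂ M]
variable {N : Type*} [AddCommGroup N] [Module ℂ N]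

/-- `W` is a submodule for the module with operators `A, B, C`: it is invariant
under all three operators. -/
def Invariant (A B C : M →ₗ[ℂ] M) (W : Submodule ℂ M) : Prop :=
  (∀ x ∈ W, A x ∈ W) ∧ (∀ x ∈ W, B x ∈ W) ∧ (∀ x ∈ W, C x ∈ W)

/-- The module with operators `A, B, C` is irreducible: its only submodules are
`0` and the whole space. -/
def IsIrreducibleRep (A B C : M →ₗ[ℂ] M) : Prop :=
  ∀ W : Submodule ℂ M, Invariant A B C W → W = ⊥ ∨ W = ⊤

/-- `W` is an irreducible submodule: invariant, nonzero, and with no nonzero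
proper invariant subspace. -/
def IsIrreducibleSubmodule (A B C : M →ₗ[ℂ] M) (W : Submodule ℂ M) : Prop :=
  Invariant A B C W ∧ W ≠ ⊥ ∧
    ∀ U : Submodule ℂ M, Invariant A B C U → U ≤ W → U = ⊥ ∨ U = W

/-- The module with operators `A, B, C` is completely reducible: every invariant
subspace has an invariant complement. -/
def CompletelyReducible (A B C : M →ₗ[ℂ] M) : Prop :=
  ∀ W : Submodule ℂ M, Invariant A B C W →
    ∃ U : Submodule ℂ M, Invariant A B C U ∧ IsCompl W U

/-- The two modules (given by operator triples) are isomorphic. -/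
def Intertwined (A B C : M →ₗ[ℂ] M) (A' B' C' : N →ₗ[ℂ] N) : Prop :=
  ∃ e : M ≃ₗ[ℂ] N, (∀ x, e (A x) = A' (e x)) ∧ (∀ x, e (B x) = B' (e x)) ∧
    (∀ x, e (C x) = C' (e x))

/-- An invariant Hermitian form for the module with operators `A, B, C`
(`A` playing the role of `H`, `B` of `E`, `C` of `F`): a sesquilinear form,
conjugate-symmetric, with `⟨Hv,w⟩ = ⟨v,Hw⟩`, `⟨Ev,w⟩ + ⟨v,Fw⟩ = 0`,
`⟨Fv,w⟩ + ⟨v,Ew⟩ = 0`. -/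
structure IsInvHermForm (A B C : M →ₗ[ℂ] M) (Φ : M → M → ℂ) : Prop where
  add_left : ∀ u v w, Φ (u + v) w = Φ u w + Φ v w
  smul_left : ∀ (a : ℂ) (v w : M), Φ (a • v) w = a * Φ v w
  conj_symm : ∀ v w, Φ w v = (starRingEnd ℂ) (Φ v w)
  inv_A : ∀ v w, Φ (A v) w = Φ v (A w)
  inv_BC : ∀ v w, Φ (B v) w + Φ v (C w) = 0
  inv_CB : ∀ v w, Φ (C v) w + Φ v (B w) = 0

end ModuleNotions

/-- `span{v_j : j ≥ n}`. -/
noncomputable def spanGE (ε : ℤˣ) (n : ℤ) : Submodule ℂ (V ε) :=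
  Submodule.span ℂ {x : V ε | ∃ j : idx ε, n ≤ j.1 ∧ x = Finsupp.single j 1}

/-- `span{v_j : j ≤ n}`. -/
noncomputable def spanLE (ε : ℤˣ) (n : ℤ) : Submodule ℂ (V ε) :=
  Submodule.span ℂ {x : V ε | ∃ j : idx ε, j.1 ≤ n ∧ x = Finsupp.single j 1}

/-- `span{v_j : |j| ≤ n}`. -/
noncomputable def spanAbsLE (ε : ℤˣ) (n : ℤ) : Submodule ℂ (V ε) :=
  Submodule.span ℂ {x : V ε | ∃ j : idx ε, |j.1| ≤ n ∧ x = Finsupp.single j 1}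

/-- The diagonal operator `S v_j = c j • v_j`. -/
noncomputable def diagMap (ε : ℤˣ) (c : idx ε → ℂ) : V ε →ₗ[ℂ] V ε :=
  Finsupp.lsum ℂ fun j => LinearMap.toSpanSingleton ℂ (V ε) (Finsupp.single j (c j))

/-!
`H` is diagonal with pairwise distinct eigenvalues `j`, so every submodule is spanned by the
basis vectors `v_j` it contains. `E` sends `v_j` to a nonzero multiple of `v_{j+2}` except at
`j = -(n+1)`, and `F` sends `v_j` to a nonzero multiple of `v_{j-2}` except at `j = n+1`. So a
submodule containing `v_j` contains every `v_i` that can be reached from `j` without crossing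
one of these two barriers. A submodule containing some `v_j` with `|j| < n + 1` is therefore
everything, `W⁺` and `W⁻` are generated by any of their basis vectors, and `W⁺ ⊕ W⁻` is the
largest proper submodule; the quotient has as basis the images of the `n` vectors `v_j` with
`|j| < n + 1` and is irreducible by maximality.
-/

section Diagonal

variable {K ι : Type*} [Field K]

theorem single_mem_of_diagonal_invariant {T : (ι →₀ K) →ₗ[K] (ι →₀ K)} {μ : ι → K}
    (hμ : Function.Injective μ) (hT : ∀ x k, T x k = μ k * x k) {U : Submodule K (ι →₀ K)}
    (hU : ∀ x ∈ U, T x ∈ U) {x : ι →₀ K} (hx : x ∈ U) {k : ι} (hk : k ∈ x.support) :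
    Finsupp.single k 1 ∈ U := by
  classical
  -- `T - μ j` kills the `j`-coordinate and rescales the `k`-coordinate by `μ k - μ j ≠ 0`.
  suffices key : ∀ s : Finset ι, ∀ x ∈ U, x.support ⊆ insert k s → Finsupp.single k (x k) ∈ U by
    have h := U.smul_mem (x k)⁻¹ (key x.support x hx (Finset.subset_insert _ _))
    rwa [Finsupp.smul_single, smul_eq_mul, inv_mul_cancel₀ (Finsupp.mem_support_iff.mp hk)] at h
  intro s
  induction s using Finset.induction_on with
  | empty =>
    intro x hx hsupp
    rwa [← Finsupp.support_subset_singleton.mp hsupp]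
  | insert j s _ ih =>
    intro x hx hsupp
    rcases eq_or_ne j k with rfl | hjk
    · exact ih x hx (by rwa [Finset.insert_idem] at hsupp)
    set y := T x - μ j • x
    have hy : ∀ m, y m = (μ m - μ j) * x m := fun m => by
      simp only [y, Finsupp.sub_apply, Finsupp.smul_apply, hT, smul_eq_mul]; ring
    have hyU : Finsupp.single k (y k) ∈ U := by
      refine ih y (U.sub_mem (hU x hx) (U.smul_mem _ hx)) fun m hm => ?_
      rw [Finsupp.mem_support_iff, hy] at hm
      have hmj : m ≠ j := by rintro rfl; simp at hm
      have := hsupp (Finsupp.mem_support_iff.mpr (right_ne_zero_of_mul hm))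
      simp only [Finset.mem_insert] at this ⊢
      tauto
    have hne : μ k - μ j ≠ 0 := sub_ne_zero.mpr (hμ.ne hjk.symm)
    rwa [hy, ← smul_eq_mul, ← Finsupp.smul_single, Submodule.smul_mem_iff _ hne] at hyU

end Diagonal

theorem isIrreducibleRep_mapQ_of_forall_le {M : Type*} [AddCommGroup M] [Module ℂ M]
    {A B C : M →ₗ[ℂ] M} {W : Submodule ℂ M} (hA : W ≤ W.comap A) (hB : W ≤ W.comap B)
    (hC : W ≤ W.comap C) (hmax : ∀ U, Invariant A B C U → U ≠ ⊤ → U ≤ W) :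
    IsIrreducibleRep (W.mapQ W A hA) (W.mapQ W B hB) (W.mapQ W C hC) := by
  intro U' hU'
  have hU : Invariant A B C (U'.comap W.mkQ) :=
    ⟨fun x hx => hU'.1 _ hx, fun x hx => hU'.2.1 _ hx, fun x hx => hU'.2.2 _ hx⟩
  by_cases htop : U'.comap W.mkQ = ⊤
  · right
    rw [← Submodule.map_comap_eq_of_surjective W.mkQ_surjective U', htop, Submodule.map_top,
      Submodule.range_mkQ]
  · left
    rw [eq_bot_iff]
    intro y hy
    obtain ⟨x, rfl⟩ := W.mkQ_surjective y
    exact (Submodule.Quotient.mk_eq_zero W).mpr (hmax _ hU htop hy)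

section ShiftOperators

variable {ε : ℤˣ}

theorem shiftOp_single {s : ℤ} (hs : (-1 : ℤˣ) ^ s = 1) (c : ℤ → ℂ) (j : idx ε) :
    shiftOp ε s hs c (Finsupp.single j 1) =
      c j.1 • Finsupp.single (⟨j.1 + s, parity_shift j.2 hs⟩ : idx ε) 1 := by
  rw [shiftOp, Finsupp.lsum_single, LinearMap.toSpanSingleton_apply, one_smul,
    Finsupp.smul_single, smul_eq_mul, mul_one]

theorem supported_le_comap_shiftOp {s : ℤ} (hs : (-1 : ℤˣ) ^ s = 1) (c : ℤ → ℂ) {S : Set ℤ}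
    (hS : ∀ j : idx ε, j.1 ∈ S → c j.1 ≠ 0 → j.1 + s ∈ S) :
    Finsupp.supported ℂ ℂ {j : idx ε | j.1 ∈ S} ≤
      (Finsupp.supported ℂ ℂ {j : idx ε | j.1 ∈ S}).comap (shiftOp ε s hs c) := by
  rw [Finsupp.supported_eq_span_single, Submodule.span_le]
  rintro _ ⟨j, hj, rfl⟩
  rw [SetLike.mem_coe, Submodule.mem_comap, ← Finsupp.supported_eq_span_single, shiftOp_single]
  rcases eq_or_ne (c j.1) 0 with hc | hc
  · rw [hc, zero_smul]
    exact Submodule.zero_mem _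
  · exact Submodule.smul_mem _ _ (Finsupp.single_mem_supported ℂ 1 (hS j hj hc))

theorem Hop_apply (x : V ε) (k : idx ε) : Hop ε x k = k.1 * x k := by
  induction x using Finsupp.induction_linear with
  | zero => simp
  | add x y hx hy => simp only [map_add, Finsupp.add_apply, hx, hy, mul_add]
  | single j a =>
    rw [← mul_one a, ← smul_eq_mul, ← Finsupp.smul_single, map_smul, Hop, shiftOp_single]
    obtain rfl | hkj := eq_or_ne k j
    · simp [mul_comm]
    · simp [Finsupp.single_eq_of_ne' hkj.symm]

theorem single_mem_of_Hop_invariant {U : Submodule ℂ (V ε)} (hU : ∀ x ∈ U, Hop ε x ∈ U)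
    {x : V ε} (hx : x ∈ U) {k : idx ε} (hk : k ∈ x.support) : Finsupp.single k 1 ∈ U :=
  single_mem_of_diagonal_invariant (μ := fun k : idx ε => (k.1 : ℂ))
    (fun _ _ h => Subtype.ext (Int.cast_injective h)) Hop_apply hU hx hk

theorem spanGE_eq_supported (m : ℤ) :
    spanGE ε m = Finsupp.supported ℂ ℂ {j : idx ε | j.1 ∈ Set.Ici m} := by
  rw [Finsupp.supported_eq_span_single, spanGE]
  congr 1
  ext x
  exact ⟨fun ⟨j, hj, hx⟩ => ⟨j, hj, hx.symm⟩, fun ⟨j, hj, hx⟩ => ⟨j, hj, hx.symm⟩⟩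

theorem spanLE_eq_supported (m : ℤ) :
    spanLE ε m = Finsupp.supported ℂ ℂ {j : idx ε | j.1 ∈ Set.Iic m} := by
  rw [Finsupp.supported_eq_span_single, spanLE]
  congr 1
  ext x
  exact ⟨fun ⟨j, hj, hx⟩ => ⟨j, hj, hx.symm⟩, fun ⟨j, hj, hx⟩ => ⟨j, hj, hx.symm⟩⟩

theorem spanGE_sup_spanLE_eq_supported (a b : ℤ) :
    spanGE ε a ⊔ spanLE ε b = Finsupp.supported ℂ ℂ {j : idx ε | j.1 ∈ Set.Ici a ∪ Set.Iic b} := by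
  rw [spanGE_eq_supported, spanLE_eq_supported, ← Finsupp.supported_union]
  rfl

theorem even_sub_of_idx (i j : idx ε) : Even (i.1 - j.1) := by
  rw [← Int.negOnePow_eq_iff, Int.negOnePow_def, Int.negOnePow_def, i.2, j.2]

theorem even_sub_succ_of_idx {n : ℤ} (hn : (-1 : ℤˣ) ^ n = -ε) (j : idx ε) :
    Even (j.1 - (n + 1)) := by
  rw [← Int.negOnePow_eq_iff, Int.negOnePow_def, Int.negOnePow_def, j.2, parity_succ hn]

end ShiftOperators

section PrincipalSeries

variable {ε : ℤˣ} {n : ℤ}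

theorem half_mul_intCast_ne_zero_iff {a : ℤ} {z : ℂ} (hz : z = a) :
    (1 / 2 : ℂ) * z ≠ 0 ↔ a ≠ 0 := by
  rw [hz]
  norm_num

theorem invariant_supported {S : Set ℤ}
    (hE : ∀ j : idx ε, j.1 ∈ S → n + j.1 + 1 ≠ 0 → j.1 + 2 ∈ S)
    (hF : ∀ j : idx ε, j.1 ∈ S → n - j.1 + 1 ≠ 0 → j.1 - 2 ∈ S) :
    Invariant (Hop ε) (Eop ε n) (Fop ε n) (Finsupp.supported ℂ ℂ {j : idx ε | j.1 ∈ S}) :=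
  ⟨supported_le_comap_shiftOp _ _ fun j hj _ => by rwa [add_zero],
    supported_le_comap_shiftOp _ _ fun j hj hc =>
      hE j hj ((half_mul_intCast_ne_zero_iff (by push_cast; ring)).mp hc),
    supported_le_comap_shiftOp _ _ fun j hj hc =>
      hF j hj ((half_mul_intCast_ne_zero_iff (by push_cast; ring)).mp hc)⟩

variable {U : Submodule ℂ (V ε)}

theorem single_mem_of_Eop_step (hE : ∀ x ∈ U, Eop ε n x ∈ U) {j : idx ε}
    (hj : Finsupp.single j 1 ∈ U) (hc : n + j.1 + 1 ≠ 0) :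
    Finsupp.single (⟨j.1 + 2, parity_shift j.2 parity_two⟩ : idx ε) 1 ∈ U := by
  have h := hE _ hj
  rwa [Eop, shiftOp_single, Submodule.smul_mem_iff _
    ((half_mul_intCast_ne_zero_iff (by push_cast; ring)).mpr hc)] at h

theorem single_mem_of_Fop_step (hF : ∀ x ∈ U, Fop ε n x ∈ U) {j : idx ε}
    (hj : Finsupp.single j 1 ∈ U) (hc : n - j.1 + 1 ≠ 0) :
    Finsupp.single (⟨j.1 + -2, parity_shift j.2 parity_neg_two⟩ : idx ε) 1 ∈ U := by
  have h := hF _ hj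
  rwa [Fop, shiftOp_single, Submodule.smul_mem_iff _
    ((half_mul_intCast_ne_zero_iff (by push_cast; ring)).mpr hc)] at h

theorem single_mem_of_Eop_ladder (hE : ∀ x ∈ U, Eop ε n x ∈ U) {i j : idx ε}
    (hi : Finsupp.single i 1 ∈ U) (hij : i.1 ≤ j.1) (hbarrier : -(n + 1) < i.1 ∨ j.1 ≤ -(n + 1)) :
    Finsupp.single j 1 ∈ U := by
  obtain ⟨t, ht⟩ := even_sub_of_idx j i
  lift t to ℕ using (by omega)
  induction t generalizing i with
  | zero => rwa [show j = i from Subtype.ext (by omega)]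
  | succ t ih =>
    exact ih (single_mem_of_Eop_step hE hi (by omega)) (by dsimp only; omega)
      (by dsimp only; omega) (by dsimp only; push_cast at ht ⊢; omega)

theorem single_mem_of_Fop_ladder (hF : ∀ x ∈ U, Fop ε n x ∈ U) {j k : idx ε}
    (hk : Finsupp.single k 1 ∈ U) (hjk : j.1 ≤ k.1) (hbarrier : k.1 < n + 1 ∨ n + 1 ≤ j.1) :
    Finsupp.single j 1 ∈ U := by
  obtain ⟨t, ht⟩ := even_sub_of_idx k j
  lift t to ℕ using (by omega)
  induction t generalizing k with
  | zero => rwa [show j = k from Subtype.ext (by omega)]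
  | succ t ih =>
    exact ih (single_mem_of_Fop_step hF hk (by omega)) (by dsimp only; omega)
      (by dsimp only; omega) (by dsimp only; push_cast at ht ⊢; omega)

end PrincipalSeries

section Structure

variable {ε : ℤˣ} {n : ℤ} {U : Submodule ℂ (V ε)}

theorem exists_single_mem_of_le_supported (hH : ∀ x ∈ U, Hop ε x ∈ U) (hU : U ≠ ⊥)
    {S : Set (idx ε)} (hle : U ≤ Finsupp.supported ℂ ℂ S) : ∃ k ∈ S, Finsupp.single k 1 ∈ U := by
  obtain ⟨x, hx, hx0⟩ := Submodule.exists_mem_ne_zero_of_ne_bot hU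
  obtain ⟨k, hk⟩ := Finsupp.support_nonempty_iff.mpr hx0
  exact ⟨k, hle hx hk, single_mem_of_Hop_invariant hH hx hk⟩

theorem eq_top_of_single_mem (hU : Invariant (Hop ε) (Eop ε n) (Fop ε n) U) {k : idx ε}
    (hk : Finsupp.single k 1 ∈ U) (hlow : -(n + 1) < k.1) (hhigh : k.1 < n + 1) : U = ⊤ := by
  rw [eq_top_iff, ← Finsupp.supported_univ, Finsupp.supported_eq_span_single, Submodule.span_le]
  rintro _ ⟨j, -, rfl⟩
  rcases le_total k.1 j.1 with h | h
  · exact single_mem_of_Eop_ladder hU.2.1 hk h (.inl hlow)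
  · exact single_mem_of_Fop_ladder hU.2.2 hk h (.inl hhigh)

theorem le_spanGE_sup_spanLE_of_ne_top (hU : Invariant (Hop ε) (Eop ε n) (Fop ε n) U)
    (hne : U ≠ ⊤) : U ≤ spanGE ε (n + 1) ⊔ spanLE ε (-(n + 1)) := by
  intro x hx
  rw [spanGE_sup_spanLE_eq_supported, Finsupp.mem_supported]
  intro k hk
  by_contra hmid
  simp only [Set.mem_ofPred_eq, Set.mem_union, Set.mem_Ici, Set.mem_Iic, not_or] at hmid
  exact hne (eq_top_of_single_mem hU (single_mem_of_Hop_invariant hU.1 hx hk) (by omega)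
    (by omega))

theorem invariant_spanGE (hn : (-1 : ℤˣ) ^ n = -ε) :
    Invariant (Hop ε) (Eop ε n) (Fop ε n) (spanGE ε (n + 1)) := by
  rw [spanGE_eq_supported]
  refine invariant_supported (fun j hj _ => ?_) (fun j hj hc => ?_) <;>
    obtain ⟨t, ht⟩ := even_sub_succ_of_idx hn j <;>
    simp only [Set.mem_Ici] at hj ⊢ <;> omega

theorem invariant_spanLE (hn : (-1 : ℤˣ) ^ n = -ε) :
    Invariant (Hop ε) (Eop ε n) (Fop ε n) (spanLE ε (-(n + 1))) := by
  rw [spanLE_eq_supported]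
  refine invariant_supported (fun j hj hc => ?_) (fun j hj _ => ?_) <;>
    obtain ⟨t, ht⟩ := even_sub_succ_of_idx hn j <;>
    simp only [Set.mem_Iic] at hj ⊢ <;> omega

theorem invariant_spanGE_sup_spanLE (hn : (-1 : ℤˣ) ^ n = -ε) :
    Invariant (Hop ε) (Eop ε n) (Fop ε n) (spanGE ε (n + 1) ⊔ spanLE ε (-(n + 1))) := by
  rw [spanGE_sup_spanLE_eq_supported]
  refine invariant_supported (fun j hj hc => ?_) (fun j hj hc => ?_) <;>
    obtain ⟨t, ht⟩ := even_sub_succ_of_idx hn j <;>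
    simp only [Set.mem_union, Set.mem_Ici, Set.mem_Iic] at hj ⊢ <;> omega

theorem isIrreducibleSubmodule_spanGE (hn : (-1 : ℤˣ) ^ n = -ε) (hn0 : 0 ≤ n) :
    IsIrreducibleSubmodule (Hop ε) (Eop ε n) (Fop ε n) (spanGE ε (n + 1)) := by
  have hbase : Finsupp.single (⟨n + 1, parity_succ hn⟩ : idx ε) 1 ∈ spanGE ε (n + 1) :=
    Submodule.subset_span ⟨_, le_rfl, rfl⟩
  refine ⟨invariant_spanGE hn, (Submodule.ne_bot_iff _).mpr ⟨_, hbase, by simp⟩,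
    fun U hU hle => or_iff_not_imp_left.mpr fun hbot => le_antisymm hle ?_⟩
  rw [spanGE_eq_supported] at hle
  obtain ⟨k, hk, hkU⟩ := exists_single_mem_of_le_supported hU.1 hbot hle
  have hbaseU := single_mem_of_Fop_ladder (j := ⟨n + 1, parity_succ hn⟩) hU.2.2 hkU hk
    (.inr le_rfl)
  rw [spanGE, Submodule.span_le]
  rintro _ ⟨j, hj, rfl⟩
  exact single_mem_of_Eop_ladder hU.2.1 hbaseU hj (.inl (by dsimp only; omega))

theorem isIrreducibleSubmodule_spanLE (hn : (-1 : ℤˣ) ^ n = -ε) (hn0 : 0 ≤ n) :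
    IsIrreducibleSubmodule (Hop ε) (Eop ε n) (Fop ε n) (spanLE ε (-(n + 1))) := by
  have hpar : (-1 : ℤˣ) ^ (-(n + 1)) = ε := by
    rw [zpow_neg, parity_succ hn, Int.units_inv_eq_self]
  have hbase : Finsupp.single (⟨-(n + 1), hpar⟩ : idx ε) 1 ∈ spanLE ε (-(n + 1)) :=
    Submodule.subset_span ⟨_, le_rfl, rfl⟩
  refine ⟨invariant_spanLE hn, (Submodule.ne_bot_iff _).mpr ⟨_, hbase, by simp⟩,
    fun U hU hle => or_iff_not_imp_left.mpr fun hbot => le_antisymm hle ?_⟩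
  rw [spanLE_eq_supported] at hle
  obtain ⟨k, hk, hkU⟩ := exists_single_mem_of_le_supported hU.1 hbot hle
  have hbaseU := single_mem_of_Eop_ladder (j := ⟨-(n + 1), hpar⟩) hU.2.1 hkU hk
    (.inr le_rfl)
  rw [spanLE, Submodule.span_le]
  rintro _ ⟨j, hj, rfl⟩
  exact single_mem_of_Fop_ladder hU.2.2 hbaseU hj (.inl (by dsimp only; omega))

theorem spanGE_inf_spanLE_eq_bot {a b : ℤ} (hab : b < a) : spanGE ε a ⊓ spanLE ε b = ⊥ := by
  rw [spanGE_eq_supported, spanLE_eq_supported]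
  refine disjoint_iff.mp (Finsupp.disjoint_supported_supported ?_)
  rw [Set.disjoint_left]
  intro j hja hjb
  simp only [Set.mem_ofPred_eq, Set.mem_Ici, Set.mem_Iic] at hja hjb
  omega

theorem finrank_quotient_spanGE_sup_spanLE (hn : (-1 : ℤˣ) ^ n = -ε) (hn0 : 0 ≤ n) :
    (Module.finrank ℂ (V ε ⧸ (spanGE ε (n + 1) ⊔ spanLE ε (-(n + 1)))) : ℤ) = n := by
  set S : Set (idx ε) := {j | j.1 ∈ Set.Ici (n + 1) ∪ Set.Iic (-(n + 1))}
  have hcompl : IsCompl (Finsupp.supported ℂ ℂ S) (Finsupp.supported ℂ ℂ Sᶜ) :=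
    ⟨Finsupp.disjoint_supported_supported disjoint_compl_right, codisjoint_iff.mpr <| by
      rw [← Finsupp.supported_union, Set.union_compl_self, Finsupp.supported_univ]⟩
  -- the `n` indices `n + 1 + 2 (i - n) = 1 - n, 3 - n, …, n - 1` strictly between the barriers
  let f : Fin n.toNat → ↥Sᶜ := fun i =>
    ⟨⟨n + 1 + 2 * (i - n), parity_shift (parity_succ hn) (even_two_mul _).neg_one_zpow⟩, by
      have := i.2
      simp only [S, Set.mem_compl_iff, Set.mem_ofPred_eq, Set.mem_union, Set.mem_Ici,
        Set.mem_Iic]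
      omega⟩
  have hf : Function.Bijective f := by
    refine ⟨fun i i' h => Fin.ext ?_, fun ⟨j, hj⟩ => ?_⟩
    · have := congrArg (fun j => j.1.1) h
      simp only [f] at this
      omega
    obtain ⟨t, ht⟩ := even_sub_succ_of_idx hn j
    simp only [S, Set.mem_compl_iff, Set.mem_ofPred_eq, Set.mem_union, Set.mem_Ici,
      Set.mem_Iic] at hj
    exact ⟨⟨(t + n).toNat, by omega⟩, Subtype.ext (Subtype.ext (by dsimp only [f]; omega))⟩
  have : Fintype ↥Sᶜ := Fintype.ofBijective f hf
  rw [spanGE_sup_spanLE_eq_supported, (Submodule.quotientEquivOfIsCompl _ _ hcompl).finrank_eq,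
    (Finsupp.supportedEquivFinsupp _).finrank_eq, Module.finrank_finsupp_self,
    ← Fintype.card_of_bijective hf, Fintype.card_fin]
  omega

end Structure

/-- For `n ∈ ℤ_{-ε}`, `n > 0`, in `π(ε,n)`: `W⁺ = span{v_j : j ≥ n+1}`
and `W⁻ = span{v_j : j ≤ -(n+1)}` are irreducible submodules; `W⁺ ⊕ W⁻` is the
unique maximal proper submodule; and the quotient `V_ε/(W⁺ ⊕ W⁻)` is irreducible of
dimension `n` (the unique irreducible quotient `F_n`). -/
theorem principal_series_n_pos_structure (ε : ℤˣ) (n : ℤ)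
    (hn : (-1 : ℤˣ) ^ n = -ε) (hpos : 0 < n) :
    IsIrreducibleSubmodule (Hop ε) (Eop ε (n : ℂ)) (Fop ε (n : ℂ)) (spanGE ε (n + 1)) ∧
    IsIrreducibleSubmodule (Hop ε) (Eop ε (n : ℂ)) (Fop ε (n : ℂ)) (spanLE ε (-(n + 1))) ∧
    spanGE ε (n + 1) ⊓ spanLE ε (-(n + 1)) = ⊥ ∧
    (spanGE ε (n + 1) ⊔ spanLE ε (-(n + 1)) ≠ ⊤ ∧
      ∀ U : Submodule ℂ (V ε),
        Invariant (Hop ε) (Eop ε (n : ℂ)) (Fop ε (n : ℂ)) U → U ≠ ⊤ →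
          U ≤ spanGE ε (n + 1) ⊔ spanLE ε (-(n + 1))) ∧
    ∃ (hH : spanGE ε (n + 1) ⊔ spanLE ε (-(n + 1)) ≤
        (spanGE ε (n + 1) ⊔ spanLE ε (-(n + 1))).comap (Hop ε))
      (hE : spanGE ε (n + 1) ⊔ spanLE ε (-(n + 1)) ≤
        (spanGE ε (n + 1) ⊔ spanLE ε (-(n + 1))).comap (Eop ε (n : ℂ)))
      (hF : spanGE ε (n + 1) ⊔ spanLE ε (-(n + 1)) ≤
        (spanGE ε (n + 1) ⊔ spanLE ε (-(n + 1))).comap (Fop ε (n : ℂ))),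
      IsIrreducibleRep
        (Submodule.mapQ _ _ (Hop ε) hH)
        (Submodule.mapQ _ _ (Eop ε (n : ℂ)) hE)
        (Submodule.mapQ _ _ (Fop ε (n : ℂ)) hF) ∧
      (Module.finrank ℂ (V ε ⧸ (spanGE ε (n + 1) ⊔ spanLE ε (-(n + 1)))) : ℤ) = n := by
  have hmax : ∀ U, Invariant (Hop ε) (Eop ε n) (Fop ε n) U → U ≠ ⊤ →
      U ≤ spanGE ε (n + 1) ⊔ spanLE ε (-(n + 1)) := fun _ => le_spanGE_sup_spanLE_of_ne_top
  have hrank := finrank_quotient_spanGE_sup_spanLE hn hpos.le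
  have hne_top : spanGE ε (n + 1) ⊔ spanLE ε (-(n + 1)) ≠ ⊤ :=
    Submodule.Quotient.nontrivial_iff.mp (Module.nontrivial_of_finrank_pos (R := ℂ) (by omega))
  obtain ⟨hH, hE, hF⟩ := invariant_spanGE_sup_spanLE hn
  exact ⟨isIrreducibleSubmodule_spanGE hn hpos.le, isIrreducibleSubmodule_spanLE hn hpos.le,
    spanGE_inf_spanLE_eq_bot (by omega), ⟨hne_top, hmax⟩, hH, hE, hF,
    isIrreducibleRep_mapQ_of_forall_le _ _ _ hmax, hrank⟩

end SL2Deform
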